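/- Let λ, p ∈ (0,1), ν = ν_λ^p the biased Bernoulli convolution, and δ > 0 with c_δ = inf_{x∈I_λ} ν(B(x,δ)) > 0. Suppose x ∈ I_λ has a unique expansion i in base λ and dist(F_β^n x, C_λ) ≥ δ for all n ≥ 0 (β = 1/λ). Then for all n ≥ 1: c_δ · p^{ℓ₀(i,n)} (1−p)^{ℓ₁(i,n)} ≤ ν(B(x, δλ^n)) ≤ p^{ℓ₀(i,n)} (1−p)^{ℓ₁(i,n)}, where ℓ_j(i,n) counts occurrences of digit j among i₁,…,i_n. -/

import Mathlib

/-! Digit `j` of `piL l i` corresponds to the branch `S_j`, and `F_β` acts as the shift, so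
`piL l (shiftN i n) = F_βⁿ x`. Away from the gap `C_λ` only one of `S₀, S₁` reaches a ball of
radius at most `δλ` around a point of the orbit, so the self-similarity equation collapses to
`ν(B(x, r)) = p_{i₁} ν(B(F_β x, r/λ))`. Iterating `n` times from radius `δλⁿ` gives
`ν(B(x, δλⁿ)) = p^{ℓ₀} (1-p)^{ℓ₁} ν(B(F_βⁿ x, δ))`, and `c_δ ≤ ν(B(F_βⁿ x, δ)) ≤ 1`. -/

open MeasureTheory

noncomputable section

def binSeq (i : ℕ → ℕ) : Prop := ∀ n, i n ≤ 1

def piL (l : ℝ) (i : ℕ → ℕ) : ℝ := ∑' n : ℕ, (i n : ℝ) * l ^ (n + 1)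

def shiftN (i : ℕ → ℕ) (n : ℕ) : ℕ → ℕ := fun m => i (m + n)

/-- Number of occurrences of the digit `j` among the first `n` digits of `i`. -/
def countDigit (j : ℕ) (i : ℕ → ℕ) (n : ℕ) : ℕ :=
  ((Finset.range n).filter fun m => i m = j).card

def IsBiasedBernoulliConv (l p : ℝ) (ν : Measure ℝ) : Prop :=
  ν = ENNReal.ofReal p • ν.map (fun x => l * (x + 0)) +
    ENNReal.ofReal (1 - p) • ν.map (fun x => l * (x + 1))

def AvoidsGap (l δ : ℝ) (i : ℕ → ℕ) : Prop :=
  ∀ n : ℕ, (i n = 0 → piL l (shiftN i n) ≤ l - δ) ∧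
    (i n = 1 → piL l (shiftN i n) ≥ l ^ 2 / (1 - l) + δ)

def cylinderWeight (p : ℝ) (i : ℕ → ℕ) (n : ℕ) : ℝ :=
  p ^ countDigit 0 i n * (1 - p) ^ countDigit 1 i n

section Expansions

variable {l : ℝ} {i : ℕ → ℕ}

lemma binSeq_shiftN (hi : binSeq i) (n : ℕ) : binSeq (shiftN i n) :=
  fun m => hi (m + n)

lemma binSeq.eq_zero_or_eq_one (hi : binSeq i) (n : ℕ) : i n = 0 ∨ i n = 1 :=
  Nat.le_one_iff_eq_zero_or_eq_one.mp (hi n)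

lemma shiftN_shiftN_one (n : ℕ) : shiftN (shiftN i n) 1 = shiftN i (n + 1) := by
  funext m
  simp only [shiftN, Nat.add_right_comm m 1 n, Nat.add_assoc]

lemma shiftN_zero : shiftN i 0 = i := rfl

lemma binSeq.digit_mul_pow_le (hl0 : 0 < l) (hi : binSeq i) (n : ℕ) :
    (i n : ℝ) * l ^ (n + 1) ≤ l * l ^ n := by
  rw [pow_succ', mul_comm l]
  exact mul_le_of_le_one_left (by positivity) (by exact_mod_cast hi n)

lemma binSeq.summable_digits (hl0 : 0 < l) (hl1 : l < 1) (hi : binSeq i) :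
    Summable fun n => (i n : ℝ) * l ^ (n + 1) :=
  Summable.of_nonneg_of_le (fun n => by positivity) (hi.digit_mul_pow_le hl0)
    ((summable_geometric_of_lt_one hl0.le hl1).mul_left l)

lemma piL_nonneg (hl0 : 0 < l) (i : ℕ → ℕ) : 0 ≤ piL l i :=
  tsum_nonneg fun n => by positivity

lemma binSeq.piL_le (hl0 : 0 < l) (hl1 : l < 1) (hi : binSeq i) :
    piL l i ≤ l / (1 - l) :=
  calc piL l i ≤ ∑' n : ℕ, l * l ^ n :=
        (hi.summable_digits hl0 hl1).tsum_le_tsum (hi.digit_mul_pow_le hl0)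
          ((summable_geometric_of_lt_one hl0.le hl1).mul_left l)
    _ = l / (1 - l) := by
        rw [tsum_mul_left, tsum_geometric_of_lt_one hl0.le hl1, div_eq_mul_inv]

lemma binSeq.piL_mem_Icc (hl0 : 0 < l) (hl1 : l < 1) (hi : binSeq i) :
    piL l i ∈ Set.Icc 0 (l / (1 - l)) :=
  ⟨piL_nonneg hl0 i, hi.piL_le hl0 hl1⟩

lemma binSeq.piL_eq (hl0 : 0 < l) (hl1 : l < 1) (hi : binSeq i) :
    piL l i = l * (i 0 + piL l (shiftN i 1)) := by
  rw [piL, (hi.summable_digits hl0 hl1).tsum_eq_zero_add, piL, mul_add, ← tsum_mul_left]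
  congr 1
  · ring
  · exact tsum_congr fun n => by simp only [shiftN]; ring

lemma binSeq.piL_shiftN_eq (hl0 : 0 < l) (hl1 : l < 1) (hi : binSeq i) (n : ℕ) :
    piL l (shiftN i n) = l * (i n + piL l (shiftN i (n + 1))) := by
  rw [(binSeq_shiftN hi n).piL_eq hl0 hl1, shiftN_shiftN_one, shiftN, zero_add]

end Expansions

section Weights

variable {p : ℝ} {i : ℕ → ℕ}

lemma countDigit_succ (j : ℕ) (i : ℕ → ℕ) (n : ℕ) :
    countDigit j i (n + 1) = countDigit j i n + if i n = j then 1 else 0 := by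
  unfold countDigit
  rw [Finset.range_add_one, Finset.filter_insert]
  split_ifs
  · rw [Finset.card_insert_of_notMem (by simp)]
  · rfl

lemma cylinderWeight_zero : cylinderWeight p i 0 = 1 := by
  simp [cylinderWeight, countDigit]

lemma binSeq.cylinderWeight_succ (hi : binSeq i) (n : ℕ) :
    cylinderWeight p i (n + 1) = cylinderWeight p i n * if i n = 0 then p else 1 - p := by
  simp only [cylinderWeight, countDigit_succ]
  rcases hi.eq_zero_or_eq_one n with h | h <;> simp [h, pow_succ] <;> ring

lemma cylinderWeight_nonneg (hp0 : 0 ≤ p) (hp1 : p ≤ 1) (i : ℕ → ℕ) (n : ℕ) :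
    0 ≤ cylinderWeight p i n :=
  mul_nonneg (pow_nonneg hp0 _) (pow_nonneg (by linarith) _)

end Weights

section SelfSimilar

variable {l p : ℝ} {ν : Measure ℝ}

lemma preimage_mul_add_ball (hl0 : 0 < l) (a c r : ℝ) :
    (fun z : ℝ => l * (z + a)) ⁻¹' Metric.ball (l * c) r = Metric.ball (c - a) (r / l) := by
  ext z
  simp only [Set.mem_preimage, Metric.mem_ball, Real.dist_eq, lt_div_iff₀ hl0]
  rw [show l * (z + a) - l * c = l * (z - (c - a)) by ring, abs_mul, abs_of_pos hl0, mul_comm]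

lemma measure_ball_mul_eq (hl0 : 0 < l)
    (hss : IsBiasedBernoulliConv l p ν) (c r : ℝ) :
    ν (Metric.ball (l * c) r) =
      ENNReal.ofReal p * ν (Metric.ball c (r / l)) +
        ENNReal.ofReal (1 - p) * ν (Metric.ball (c - 1) (r / l)) := by
  have hmeas (a : ℝ) : Measurable fun z : ℝ => l * (z + a) :=
    (measurable_id.add_const a).const_mul l
  conv_lhs => rw [hss]
  rw [Measure.add_apply, Measure.smul_apply, Measure.smul_apply,
    Measure.map_apply (hmeas 0) measurableSet_ball,
    Measure.map_apply (hmeas 1) measurableSet_ball,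
    preimage_mul_add_ball hl0, preimage_mul_add_ball hl0, sub_zero, smul_eq_mul, smul_eq_mul]

lemma measure_ball_eq_zero_of_support {a b : ℝ} (hsupp : ν (Set.Icc a b)ᶜ = 0) {c r : ℝ}
    (h : c + r ≤ a ∨ b ≤ c - r) : ν (Metric.ball c r) = 0 := by
  refine measure_mono_null (fun z hz => ?_) hsupp
  obtain ⟨h1, h2⟩ := abs_lt.mp (Metric.mem_ball.mp hz)
  simp only [Set.mem_compl_iff, Set.mem_Icc, not_and_or, not_le]
  rcases h with h | h
  · left; linarith
  · right; linarith

lemma measure_ball_mul_of_add_le (hl0 : 0 < l)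
    (hss : IsBiasedBernoulliConv l p ν)
    (hsupp : ν (Set.Icc 0 (l / (1 - l)))ᶜ = 0) {c r : ℝ} (h : l * c + r ≤ l) :
    ν (Metric.ball (l * c) r) = ENNReal.ofReal p * ν (Metric.ball c (r / l)) := by
  have hout : c - 1 + r / l ≤ 0 := by
    rw [← mul_le_mul_iff_of_pos_left hl0]
    field_simp
    linarith
  rw [measure_ball_mul_eq hl0 hss, measure_ball_eq_zero_of_support hsupp (Or.inl hout),
    mul_zero, add_zero]

lemma measure_ball_mul_one_add_of_le (hl0 : 0 < l)
    (hss : IsBiasedBernoulliConv l p ν)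
    (hsupp : ν (Set.Icc 0 (l / (1 - l)))ᶜ = 0) 
    {c r : ℝ} (h : l ^ 2 / (1 - l) ≤ l * (1 + c) - r) :
    ν (Metric.ball (l * (1 + c)) r) = ENNReal.ofReal (1 - p) * ν (Metric.ball c (r / l)) := by
  have hout : l / (1 - l) ≤ 1 + c - r / l := by
    rw [← mul_le_mul_iff_of_pos_left hl0]
    field_simp
    rw [div_eq_mul_inv] at h ⊢
    nlinarith
  rw [measure_ball_mul_eq hl0 hss, measure_ball_eq_zero_of_support hsupp (Or.inr hout),
    mul_zero, zero_add, add_sub_cancel_left]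

end SelfSimilar

section Orbit

variable {l p δ : ℝ} {ν : Measure ℝ} {i : ℕ → ℕ}

lemma measure_ball_piL_shiftN (hl0 : 0 < l) (hl1 : l < 1)
    (hss : IsBiasedBernoulliConv l p ν)
    (hsupp : ν (Set.Icc 0 (l / (1 - l)))ᶜ = 0)
    (hi : binSeq i) (horb : AvoidsGap l δ i) (m : ℕ) {r : ℝ} (hr0 : 0 ≤ r) (hr : r ≤ δ * l) :
    ν (Metric.ball (piL l (shiftN i m)) r) =
      ENNReal.ofReal (if i m = 0 then p else 1 - p) *
        ν (Metric.ball (piL l (shiftN i (m + 1))) (r / l)) := by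
  have hrδ : r ≤ δ := by nlinarith
  have horb_m := horb m
  rw [hi.piL_shiftN_eq hl0 hl1 m] at horb_m ⊢
  rcases hi.eq_zero_or_eq_one m with h | h
  · rw [h, Nat.cast_zero, zero_add] at horb_m ⊢
    rw [if_pos rfl]
    exact measure_ball_mul_of_add_le hl0 hss hsupp (by linarith [horb_m.1 rfl])
  · rw [h, Nat.cast_one] at horb_m ⊢
    rw [if_neg one_ne_zero]
    exact measure_ball_mul_one_add_of_le hl0 hss hsupp (by linarith [horb_m.2 rfl])

lemma measure_ball_piL_mul_pow (hl0 : 0 < l) (hl1 : l < 1) (hp0 : 0 ≤ p) (hp1 : p ≤ 1)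
    (hss : IsBiasedBernoulliConv l p ν)
    (hsupp : ν (Set.Icc 0 (l / (1 - l)))ᶜ = 0)
    (hi : binSeq i) (horb : AvoidsGap l δ i) (n : ℕ) {r : ℝ} (hr0 : 0 ≤ r) (hr : r ≤ δ) :
    ν (Metric.ball (piL l i) (r * l ^ n)) =
      ENNReal.ofReal (cylinderWeight p i n) * ν (Metric.ball (piL l (shiftN i n)) r) := by
  induction n generalizing r with
  | zero => simp [cylinderWeight_zero, shiftN_zero]
  | succ n ih =>
    have hrl : r * l ≤ δ := by nlinarith
    rw [pow_succ', ← mul_assoc, ih (by positivity) hrl,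
      measure_ball_piL_shiftN hl0 hl1 hss hsupp hi horb n (by positivity) (by nlinarith),
      mul_div_cancel_right₀ r hl0.ne', ← mul_assoc,
      ← ENNReal.ofReal_mul (cylinderWeight_nonneg hp0 hp1 i n), ← hi.cylinderWeight_succ]

end Orbit

theorem stmt7_general (l p δ : ℝ) (hl0 : 0 < l) (hl1 : l < 1) (hp0 : 0 < p) (hp1 : p < 1)
    (hδ : 0 < δ)
    (ν : Measure ℝ) [IsProbabilityMeasure ν]
    (hss : ν = ENNReal.ofReal p • ν.map (fun x => l * (x + 0)) +
      ENNReal.ofReal (1 - p) • ν.map (fun x => l * (x + 1)))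
    (hsupp : ν (Set.Icc 0 (l / (1 - l)))ᶜ = 0)
    (x : ℝ)
    (i : ℕ → ℕ) (hib : binSeq i) (hix : piL l i = x)
    -- `F_β`-orbit stays at distance ≥ δ from the gap `C_λ = [λ, λ²/(1-λ)]`:
    (horb : ∀ n : ℕ, (i n = 0 → piL l (shiftN i n) ≤ l - δ) ∧
      (i n = 1 → piL l (shiftN i n) ≥ l ^ 2 / (1 - l) + δ)) :
    ∀ n : ℕ, 1 ≤ n →
      (⨅ y ∈ Set.Icc 0 (l / (1 - l)), ν (Metric.ball y δ)) *
          ENNReal.ofReal (p ^ countDigit 0 i n * (1 - p) ^ countDigit 1 i n) ≤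
        ν (Metric.ball x (δ * l ^ n)) ∧
      ν (Metric.ball x (δ * l ^ n)) ≤
        ENNReal.ofReal (p ^ countDigit 0 i n * (1 - p) ^ countDigit 1 i n) := by
  intro n _
  have hball : ν (Metric.ball x (δ * l ^ n)) = ENNReal.ofReal (cylinderWeight p i n) *
      ν (Metric.ball (piL l (shiftN i n)) δ) := by
    rw [← hix]
    exact measure_ball_piL_mul_pow hl0 hl1 hp0.le hp1.le hss hsupp hib horb n hδ.le le_rfl
  rw [hball]
  constructor
  · refine (mul_le_mul_left ?_ _).trans_eq (mul_comm _ _)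
    exact biInf_le (fun y => ν (Metric.ball y δ)) ((binSeq_shiftN hib n).piL_mem_Icc hl0 hl1)
  · exact mul_le_of_le_one_right' prob_le_one

theorem stmt7 (l p δ : ℝ) (hl0 : 0 < l) (hl1 : l < 1) (hp0 : 0 < p) (hp1 : p < 1)
    (hδ : 0 < δ)
    (ν : Measure ℝ) [IsProbabilityMeasure ν]
    (hss : ν = ENNReal.ofReal p • ν.map (fun x => l * (x + 0)) +
      ENNReal.ofReal (1 - p) • ν.map (fun x => l * (x + 1)))
    (hsupp : ν (Set.Icc 0 (l / (1 - l)))ᶜ = 0)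
    (x : ℝ) (hx : x ∈ Set.Icc 0 (l / (1 - l)))
    (i : ℕ → ℕ) (hib : binSeq i) (hix : piL l i = x)
    (huniq : ∀ j : ℕ → ℕ, binSeq j → piL l j = x → j = i)
    -- `F_β`-orbit stays at distance ≥ δ from the gap `C_λ = [λ, λ²/(1-λ)]`:
    (horb : ∀ n : ℕ, (i n = 0 → piL l (shiftN i n) ≤ l - δ) ∧
      (i n = 1 → piL l (shiftN i n) ≥ l ^ 2 / (1 - l) + δ)) :
    ∀ n : ℕ, 1 ≤ n →
      (⨅ y ∈ Set.Icc 0 (l / (1 - l)), ν (Metric.ball y δ)) *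
          ENNReal.ofReal (p ^ countDigit 0 i n * (1 - p) ^ countDigit 1 i n) ≤
        ν (Metric.ball x (δ * l ^ n)) ∧
      ν (Metric.ball x (δ * l ^ n)) ≤
        ENNReal.ofReal (p ^ countDigit 0 i n * (1 - p) ^ countDigit 1 i n) :=
  stmt7_general l p δ hl0 hl1 hp0 hp1 hδ ν hss hsupp x i hib hix horb
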